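/- arXiv:math/0102199 — 2 statements merged into one kernel-verified Lean document; each statement's English description precedes it below -/
import Mathlib

section
/- Let P be the Markov kernel of the random walk on a weighted graph whose Cheeger constant is at least i (i.e., |∂S| ≥ i|S| for all finite vertex sets S). Then the operator norm of P on L²(V, w) satisfies ‖P‖ ≤ (1 − i²)^{1/2} ≤ 1 − i²/2. -/
open scoped BigOperators Classical
open Filter MeasureTheory

variable {V : Type*}

/-- Vertex weight: sum of incident edge weights. -/
noncomputable def vtxWeight (w : V → V → ℝ) (v : V) : ℝ := ∑' u, w v u

/-- Volume of a finite vertex set. -/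
noncomputable def vol (w : V → V → ℝ) (S : Finset V) : ℝ := ∑ v ∈ S, vtxWeight w v

/-- Volume of the edge boundary of a finite vertex set. -/
noncomputable def bdry (w : V → V → ℝ) (S : Finset V) : ℝ :=
  ∑ v ∈ S, ∑' u, ((↑S : Set V)ᶜ).indicator (w v) u

/-- The `i`-isolation `Δ_i S = i|S| - |∂S|`. -/
noncomputable def isol (i : ℝ) (w : V → V → ℝ) (S : Finset V) : ℝ :=
  i * vol w S - bdry w S

/-- An `i`-isolated core: `Δ_i` strictly dominates `Δ_i` of every proper subset. -/
def IsCore (i : ℝ) (w : V → V → ℝ) (S : Finset V) : Prop :=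
  ∀ A : Finset V, A ⊂ S → isol i w A < isol i w S

/-- The union `A_i` of all `i`-isolated cores. -/
def coreUnion (i : ℝ) (w : V → V → ℝ) : Set V :=
  {v | ∃ S : Finset V, IsCore i w S ∧ v ∈ S}

/-- The underlying graph of a weighted graph: adjacency iff positive weight. -/
noncomputable def gra (w : V → V → ℝ) : SimpleGraph V :=
  SimpleGraph.fromRel (fun u v => 0 < w u v)

/-- A set of vertices is connected if its induced subgraph is connected. -/
def ConnSet (w : V → V → ℝ) (S : Set V) : Prop :=
  (SimpleGraph.induce S (gra w)).Connected

/-- `i`-anchored expansion: every vertex lies in only finitely many connected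
finite vertex sets with positive `i`-isolation. -/
def Anchored (i : ℝ) (w : V → V → ℝ) : Prop :=
  ∀ v : V, {S : Finset V | v ∈ S ∧ ConnSet w (↑S) ∧ 0 < isol i w S}.Finite

/-- An `i`-island: a connected component of `A_i`. -/
def IsIsland (i : ℝ) (w : V → V → ℝ) (C : Set V) : Prop :=
  C.Nonempty ∧ C ⊆ coreUnion i w ∧ ConnSet w C ∧
    ∀ C' : Set V, C ⊆ C' → C' ⊆ coreUnion i w → ConnSet w C' → C' = C

/-- Transition kernel of the random walk on the weighted graph. -/
noncomputable def markov (w : V → V → ℝ) (u v : V) : ℝ := w u v / vtxWeight w u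

/-- `n`-step transition kernel of a Markov kernel `p`. -/
noncomputable def kern (p : V → V → ℝ) : ℕ → V → V → ℝ
  | 0, x, y => if x = y then 1 else 0
  | n + 1, x, y => ∑' z, p x z * kern p n z y

/-!
Peeling off the minimum of a nonnegative finitely supported `h` again and again (a discrete
coarea formula) turns the isoperimetric inequality `i |S| ≤ |∂S|` into
`i ∑ h(v) w(v) ≤ ∑_{v,u} w(v,u) (h(v) - h(u))⁺`. Applied to `h = f²` and combined with
Cauchy–Schwarz via `|a² - b²| = |a - b| |a + b|`, it gives
`i ‖f‖² ≤ ((‖f‖² - ⟨Pf, f⟩) (‖f‖² + ⟨Pf, f⟩))^{1/2}`,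
i.e. `⟨Pf, f⟩² ≤ (1 - i²) ‖f‖⁴`. Since `P` is self-adjoint, a discriminant argument upgrades
this to `⟨Pf, g⟩² ≤ (1 - i²) ‖f‖² ‖g‖²`, and `g = Pf` (cut off to finite sets) gives the
norm bound.
All sums are taken over a finite set `t` carrying the supports; the edges leaving `t` only enter
through `outWeight`.
-/

open Finset Function

theorem LinearMap.BilinForm.IsSymm.sq_apply_le_of_abs_apply_self_le {E : Type*}
    [AddCommGroup E] [Module ℝ E] {B N : LinearMap.BilinForm ℝ E} (hB : B.IsSymm) {c : ℝ}
    (hBN : ∀ x, |B x x| ≤ c * N x x) (x y : E) :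
    B x y ^ 2 ≤ c ^ 2 * (N x x * N y y) := by
  have hquad : ∀ a : ℝ, 0 ≤ (2 * c * N x x) * (a * a) + (-4 * B x y) * a + 2 * c * N y y := by
    intro a
    have hplus := (le_abs_self _).trans (hBN (a • x + y))
    have hminus := (neg_le_abs _).trans (hBN (a • x - y))
    simp only [map_add, map_sub, map_smul, LinearMap.add_apply, LinearMap.sub_apply,
      LinearMap.smul_apply, smul_eq_mul, hB.eq y x] at hplus hminus
    nlinarith
  have hdiscrim := discrim_le_zero hquad
  rw [discrim] at hdiscrim
  nlinarith

noncomputable def outWeight (w : V → V → ℝ) (t : Finset V) (v : V) : ℝ :=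
  ∑' u, ((↑t : Set V)ᶜ).indicator (w v) u

section Weights

variable {w : V → V → ℝ}

theorem vtxWeight_nonneg (hnn : ∀ u v, 0 ≤ w u v) (v : V) : 0 ≤ vtxWeight w v :=
  tsum_nonneg (hnn v)

theorem outWeight_nonneg (hnn : ∀ u v, 0 ≤ w u v) (t : Finset V) (v : V) :
    0 ≤ outWeight w t v :=
  tsum_nonneg fun u => Set.indicator_nonneg (fun u _ => hnn v u) u

theorem tsum_mul_eq_sum_add_outWeight {v : V} (hwv : Summable (w v)) (t : Finset V)
    {φ : V → ℝ} {c : ℝ} (hφ : ∀ u ∉ t, φ u = c) :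
    ∑' u, w v u * φ u = ∑ u ∈ t, w v u * φ u + c * outWeight w t v := by
  have hsummable : Summable fun u => w v u * φ u := by
    have hfin : Summable fun u => w v u * (φ u - c) :=
      summable_of_ne_finset_zero fun u hu => by rw [hφ u hu, sub_self, mul_zero]
    simpa [mul_sub] using hfin.add (hwv.mul_right c)
  rw [← hsummable.sum_add_tsum_compl, outWeight, ← _root_.tsum_subtype, ← tsum_mul_left]
  congr 1
  exact tsum_congr fun u => by rw [hφ u u.2, mul_comm]

theorem vtxWeight_eq_sum_add_outWeight (hsum : ∀ v, Summable (w v)) (t : Finset V) (v : V) :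
    vtxWeight w v = ∑ u ∈ t, w v u + outWeight w t v := by
  simpa [vtxWeight] using
    tsum_mul_eq_sum_add_outWeight (hsum v) t (φ := fun _ => 1) fun _ _ => rfl

theorem tsum_mul_max_sub_eq (hsum : ∀ v, Summable (w v)) {s : Finset V} {h : V → ℝ}
    (h0 : 0 ≤ h) (hs : support h ⊆ s) (v : V) :
    ∑' u, w v u * max (h v - h u) 0
      = ∑ u ∈ s, w v u * max (h v - h u) 0 + h v * outWeight w s v :=
  tsum_mul_eq_sum_add_outWeight (hsum v) s fun u hu => by
    rw [notMem_support.1 fun hu' => hu (hs hu'), sub_zero]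
    exact max_eq_left (h0 v)

/- Subtracting the minimum `m` of `h` on `s` lowers the left side by `m i |s|` and the right side
by `m |∂s|`, and leaves a function supported on a smaller set. -/
theorem mul_sum_le_sum_tsum_mul_max_sub (hsum : ∀ v, Summable (w v)) {i : ℝ}
    (hcheeger : ∀ S : Finset V, i * vol w S ≤ bdry w S) {s : Finset V} {h : V → ℝ}
    (h0 : 0 ≤ h) (hs : support h ⊆ s) :
    i * ∑ v ∈ s, h v * vtxWeight w v ≤ ∑ v ∈ s, ∑' u, w v u * max (h v - h u) 0 := by
  induction s using Finset.strongInduction generalizing h with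
  | H s ih =>
  rcases s.eq_empty_or_nonempty with rfl | hne
  · simp
  obtain ⟨v₀, hv₀, hmin⟩ := s.exists_min_image h hne
  set m := h v₀
  set h' : V → ℝ := fun v => if v ∈ s then h v - m else 0
  have h'0 : 0 ≤ h' := fun v => by by_cases hv : v ∈ s <;> simp [h', hv, hmin v]
  have hh' : ∀ v ∈ s, h v = h' v + m := fun v hv => by simp [h', hv]
  have hs' : support h' ⊆ s.erase v₀ := fun v hv => by
    by_cases hvs : v ∈ s
    · exact mem_erase.2 ⟨by rintro rfl; simp [h', hvs, m] at hv, hvs⟩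
    · simp [h', hvs] at hv
  have h'v₀ : h' v₀ = 0 := by simpa [hv₀] using hs'.mt (notMem_erase v₀ s)
  have hIH := ih _ (erase_ssubset hv₀) h'0 hs'
  rw [sum_erase _ (by simp [h'v₀]),
    sum_erase _ (by simp [h'v₀, fun u => max_eq_right (neg_nonpos.2 (h'0 u))])] at hIH
  have hlhs : ∑ v ∈ s, h v * vtxWeight w v = ∑ v ∈ s, h' v * vtxWeight w v + m * vol w s := by
    rw [vol, mul_sum, ← sum_add_distrib]
    exact sum_congr rfl fun v hv => by rw [hh' v hv]; ring
  have hrhs : ∑ v ∈ s, ∑' u, w v u * max (h v - h u) 0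
      = ∑ v ∈ s, ∑' u, w v u * max (h' v - h' u) 0 + m * bdry w s := by
    rw [bdry, mul_sum, ← sum_add_distrib]
    refine sum_congr rfl fun v hv => ?_
    rw [tsum_mul_max_sub_eq hsum h0 hs,
      tsum_mul_max_sub_eq hsum h'0 (hs'.trans (erase_subset _ _)),
      sum_congr rfl fun u hu => by rw [hh' v hv, hh' u hu, add_sub_add_right_eq_sub], hh' v hv]
    simp only [outWeight]
    ring
  rw [hlhs, hrhs, mul_add]
  nlinarith [mul_le_mul_of_nonneg_left (hcheeger s) (h0 v₀)]

end Weights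

section Forms

variable (w : V → V → ℝ) (t : Finset V)

/- For `a`, `b` supported in `t`, `edgeForm w t a b = ⟨b, P a⟩` and `degreeForm w t a b = ⟨a, b⟩`
in `L²(V, w)`. -/
noncomputable def edgeForm : LinearMap.BilinForm ℝ (V → ℝ) :=
  LinearMap.mk₂ ℝ (fun a b => ∑ v ∈ t, ∑ u ∈ t, w v u * a u * b v)
    (fun _ _ _ => by simp only [Pi.add_apply, mul_add, add_mul, sum_add_distrib])
    (fun _ _ _ => by simp only [Pi.smul_apply, smul_eq_mul, mul_sum, mul_assoc, mul_left_comm])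
    (fun _ _ _ => by simp only [Pi.add_apply, mul_add, sum_add_distrib])
    (fun _ _ _ => by simp only [Pi.smul_apply, smul_eq_mul, mul_sum, mul_assoc, mul_left_comm])

noncomputable def degreeForm : LinearMap.BilinForm ℝ (V → ℝ) :=
  LinearMap.mk₂ ℝ (fun a b => ∑ v ∈ t, a v * b v * vtxWeight w v)
    (fun _ _ _ => by simp only [Pi.add_apply, add_mul, sum_add_distrib])
    (fun _ _ _ => by simp only [Pi.smul_apply, smul_eq_mul, mul_sum, mul_assoc])
    (fun _ _ _ => by simp only [Pi.add_apply, mul_add, add_mul, sum_add_distrib])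
    (fun _ _ _ => by simp only [Pi.smul_apply, smul_eq_mul, mul_sum, mul_assoc, mul_left_comm])

@[simp]
theorem edgeForm_apply (a b : V → ℝ) :
    edgeForm w t a b = ∑ v ∈ t, ∑ u ∈ t, w v u * a u * b v := rfl

@[simp]
theorem degreeForm_apply (a b : V → ℝ) :
    degreeForm w t a b = ∑ v ∈ t, a v * b v * vtxWeight w v := rfl

variable {w t}

theorem sum_sum_mul_swap (hsymm : ∀ u v, w u v = w v u) (F : V → V → ℝ) :
    ∑ v ∈ t, ∑ u ∈ t, w v u * F u v = ∑ v ∈ t, ∑ u ∈ t, w v u * F v u := by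
  rw [sum_comm]
  exact sum_congr rfl fun v _ => sum_congr rfl fun u _ => by rw [hsymm]

theorem edgeForm_isSymm (hsymm : ∀ u v, w u v = w v u) : (edgeForm w t).IsSymm :=
  ⟨fun a b => by
    simp only [edgeForm_apply, mul_assoc]
    rw [sum_sum_mul_swap hsymm fun u v => a u * b v]
    exact sum_congr rfl fun _ _ => sum_congr rfl fun _ _ => by ring⟩

theorem degreeForm_self_nonneg (hnn : ∀ u v, 0 ≤ w u v) (h : V → ℝ) :
    0 ≤ degreeForm w t h h :=
  sum_nonneg fun v _ => mul_nonneg (mul_self_nonneg _) (vtxWeight_nonneg hnn v)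

theorem degreeForm_self_eq (hsum : ∀ v, Summable (w v)) (h : V → ℝ) :
    degreeForm w t h h
      = ∑ v ∈ t, ∑ u ∈ t, w v u * h v ^ 2 + ∑ v ∈ t, h v ^ 2 * outWeight w t v := by
  simp only [degreeForm_apply, vtxWeight_eq_sum_add_outWeight hsum t, ← sum_add_distrib]
  exact sum_congr rfl fun v _ => by rw [← sum_mul]; ring

theorem sum_sum_mul_add_sq (hsymm : ∀ u v, w u v = w v u) (h : V → ℝ) (ε : ℝ) :
    ∑ v ∈ t, ∑ u ∈ t, w v u * (h v + ε * h u) ^ 2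
      = (1 + ε ^ 2) * ∑ v ∈ t, ∑ u ∈ t, w v u * h v ^ 2 + 2 * ε * edgeForm w t h h := by
  have hexpand : ∀ v u, w v u * (h v + ε * h u) ^ 2
      = w v u * h v ^ 2 + ε ^ 2 * (w v u * h u ^ 2) + 2 * ε * (w v u * h u * h v) :=
    fun _ _ => by ring
  simp only [hexpand, sum_add_distrib, ← mul_sum, edgeForm_apply]
  rw [sum_sum_mul_swap hsymm fun u _ => h u ^ 2]
  ring

theorem two_mul_sum_sum_mul_max_sub (hsymm : ∀ u v, w u v = w v u) (h : V → ℝ) :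
    2 * ∑ v ∈ t, ∑ u ∈ t, w v u * max (h v - h u) 0
      = ∑ v ∈ t, ∑ u ∈ t, w v u * |h v - h u| := by
  have habs : ∀ a b : ℝ, max (a - b) 0 + max (b - a) 0 = |a - b| := fun a b => by
    rw [← neg_sub a b]
    exact max_zero_add_max_neg_zero_eq_abs_self _
  rw [two_mul]
  nth_rewrite 2 [← sum_sum_mul_swap hsymm fun a b => max (h a - h b) 0]
  simp only [← sum_add_distrib, ← mul_add, habs]

theorem sq_sum_sum_mul_abs_sq_sub_le (hnn : ∀ u v, 0 ≤ w u v) (h : V → ℝ) :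
    (∑ v ∈ t, ∑ u ∈ t, w v u * |h v ^ 2 - h u ^ 2|) ^ 2
      ≤ (∑ v ∈ t, ∑ u ∈ t, w v u * (h v + (-1) * h u) ^ 2)
        * ∑ v ∈ t, ∑ u ∈ t, w v u * (h v + 1 * h u) ^ 2 := by
  simp only [← sum_product']
  refine sum_sq_le_sum_mul_sum_of_sq_le_mul _ (fun p _ => mul_nonneg (hnn _ _) (sq_nonneg _))
    (fun p _ => mul_nonneg (hnn _ _) (sq_nonneg _)) fun p _ => le_of_eq ?_
  rw [mul_pow, sq_abs]
  ring

theorem sq_edgeForm_le (hsymm : ∀ u v, w u v = w v u) (hnn : ∀ u v, 0 ≤ w u v)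
    (hsum : ∀ v, Summable (w v)) {i : ℝ} (hi0 : 0 ≤ i)
    (hcheeger : ∀ S : Finset V, i * vol w S ≤ bdry w S) {h : V → ℝ} (ht : support h ⊆ t) :
    edgeForm w t h h ^ 2 ≤ (1 - i ^ 2) * degreeForm w t h h ^ 2 := by
  set A := edgeForm w t h h
  set N' := ∑ v ∈ t, ∑ u ∈ t, w v u * h v ^ 2
  set K := ∑ v ∈ t, h v ^ 2 * outWeight w t v
  set E := ∑ v ∈ t, ∑ u ∈ t, w v u * max (h v ^ 2 - h u ^ 2) 0
  have hN : degreeForm w t h h = N' + K := degreeForm_self_eq hsum h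
  have hK : 0 ≤ K := sum_nonneg fun v _ => mul_nonneg (sq_nonneg _) (outWeight_nonneg hnn t v)
  have hE : 0 ≤ E := sum_nonneg fun v _ => sum_nonneg fun u _ =>
    mul_nonneg (hnn v u) (le_max_right _ _)
  have hcoarea : i * (N' + K) ≤ E + K := by
    have hsq : support (fun v => h v ^ 2) ⊆ t := fun v hv => ht fun h0 => hv (by simp [h0])
    have hsq0 : 0 ≤ fun v => h v ^ 2 := fun v => sq_nonneg (h v)
    have hcoarea := mul_sum_le_sum_tsum_mul_max_sub hsum hcheeger hsq0 hsq
    simp only [tsum_mul_max_sub_eq hsum hsq0 hsq, sum_add_distrib] at hcoarea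
    rw [← hN, degreeForm_apply]
    simp only [← sq]
    exact hcoarea
  have hCS := sq_sum_sum_mul_abs_sq_sub_le (t := t) hnn h
  rw [← two_mul_sum_sum_mul_max_sub hsymm, sum_sum_mul_add_sq hsymm,
    sum_sum_mul_add_sq hsymm] at hCS
  have hform : ∀ ε, 0 ≤ (1 + ε ^ 2) * N' + 2 * ε * A := fun ε => by
    rw [← sum_sum_mul_add_sq hsymm]
    exact sum_nonneg fun v _ => sum_nonneg fun u _ => mul_nonneg (hnn v u) (sq_nonneg _)
  have hminus := hform (-1)
  have hplus := hform 1
  have hEsq : E ^ 2 ≤ N' ^ 2 - A ^ 2 := by nlinarith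
  have hEN : E ≤ N' := by nlinarith
  have hiN : 0 ≤ i * (N' + K) := mul_nonneg hi0 (by linarith)
  have hEK : (E + K) ^ 2 ≤ (N' + K) ^ 2 - A ^ 2 := by nlinarith
  rw [hN]
  nlinarith [pow_le_pow_left₀ hiN hcoarea 2]

theorem abs_edgeForm_le (hsymm : ∀ u v, w u v = w v u) (hnn : ∀ u v, 0 ≤ w u v)
    (hsum : ∀ v, Summable (w v)) {i : ℝ} (hi0 : 0 ≤ i)
    (hcheeger : ∀ S : Finset V, i * vol w S ≤ bdry w S) (h : V → ℝ) :
    |edgeForm w t h h| ≤ √(1 - i ^ 2) * degreeForm w t h h := by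
  set g := (↑t : Set V).indicator h
  have hg : ∀ v ∈ t, g v = h v := fun v hv => Set.indicator_of_mem (mem_coe.2 hv) h
  have hA : edgeForm w t h h = edgeForm w t g g := by
    simp only [edgeForm_apply]
    exact sum_congr rfl fun v hv => sum_congr rfl fun u hu => by rw [hg v hv, hg u hu]
  have hN : degreeForm w t h h = degreeForm w t g g := by
    simp only [degreeForm_apply]
    exact sum_congr rfl fun v hv => by rw [hg v hv]
  rw [hA, hN]
  refine abs_le_of_sq_le_sq ?_ (mul_nonneg (Real.sqrt_nonneg _) (degreeForm_self_nonneg hnn g))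
  rw [mul_pow, Real.sq_sqrt']
  exact (sq_edgeForm_le hsymm hnn hsum hi0 hcheeger Set.support_indicator_subset).trans
    (mul_le_mul_of_nonneg_right (le_max_left _ _) (sq_nonneg _))

end Forms
section Markov

variable {w : V → V → ℝ}

theorem tsum_markov_mul_mul_vtxWeight {v : V} (hv : vtxWeight w v ≠ 0) (f : V → ℝ) :
    (∑' u, markov w v u * f u) * vtxWeight w v = ∑' u, w v u * f u := by
  simp only [markov, div_mul_eq_mul_div, tsum_div_const]
  exact mul_div_cancel_right₀ _ hv

theorem sum_sq_markov_le (hsymm : ∀ u v, w u v = w v u) (hnn : ∀ u v, 0 ≤ w u v)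
    (hsum : ∀ v, Summable (w v)) (hpos : ∀ v, 0 < vtxWeight w v) {i : ℝ} (hi0 : 0 ≤ i)
    (hi1 : i ≤ 1) (hcheeger : ∀ S : Finset V, i * vol w S ≤ bdry w S) {f : V → ℝ}
    (hf : (support f).Finite) (F : Finset V) :
    ∑ v ∈ F, (∑' u, markov w v u * f u) ^ 2 * vtxWeight w v
      ≤ (1 - i ^ 2) * ∑' v, f v ^ 2 * vtxWeight w v := by
  set t := hf.toFinset ∪ F
  have hft : support f ⊆ t := fun v hv => mem_union_left _ (hf.mem_toFinset.2 hv)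
  set Pf := fun v => ∑' u, markov w v u * f u
  set g := (↑F : Set V).indicator Pf
  set Y := ∑ v ∈ F, Pf v ^ 2 * vtxWeight w v
  have hPf : ∀ v, Pf v * vtxWeight w v = ∑ u ∈ t, w v u * f u := fun v => by
    rw [tsum_markov_mul_mul_vtxWeight (hpos v).ne', tsum_eq_sum fun u hu => by
      rw [notMem_support.1 fun h => hu (hft h), mul_zero]]
  have hgg : degreeForm w t g g = Y := by
    rw [degreeForm_apply, ← sum_subset subset_union_right fun v _ hv => by simp [g, hv]]
    exact sum_congr rfl fun v hv => by simp [g, hv, sq]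
  have hfg : edgeForm w t f g = Y := by
    rw [← hgg, edgeForm_apply, degreeForm_apply]
    refine sum_congr rfl fun v _ => ?_
    rw [← sum_mul, ← hPf]
    by_cases hv : v ∈ F <;> simp [g, hv]
    ring
  have hff : degreeForm w t f f = ∑' v, f v ^ 2 * vtxWeight w v := by
    rw [degreeForm_apply, tsum_eq_sum (s := t) fun v hv => by
      rw [notMem_support.1 fun h => hv (hft h)]; ring]
    simp only [sq]
  have hdisc := (edgeForm_isSymm (t := t) hsymm).sq_apply_le_of_abs_apply_self_le
    (abs_edgeForm_le hsymm hnn hsum hi0 hcheeger) f g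
  rw [hfg, hgg, hff, Real.sq_sqrt (by nlinarith)] at hdisc
  have hY : 0 ≤ Y := sum_nonneg fun v _ => mul_nonneg (sq_nonneg _) (vtxWeight_nonneg hnn v)
  have hS : 0 ≤ ∑' v, f v ^ 2 * vtxWeight w v :=
    tsum_nonneg fun v => mul_nonneg (sq_nonneg _) (vtxWeight_nonneg hnn v)
  have hc : 0 ≤ 1 - i ^ 2 := by nlinarith
  nlinarith [mul_nonneg hc hS]

end Markov

theorem cheeger_norm_bound (w : V → V → ℝ)
    (hsymm : ∀ u v, w u v = w v u) (hnn : ∀ u v, 0 ≤ w u v)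
    (hsum : ∀ v, Summable (w v)) (hpos : ∀ v, 0 < vtxWeight w v)
    (i : ℝ) (hi0 : 0 < i) (hi1 : i ≤ 1)
    (hcheeger : ∀ S : Finset V, i * vol w S ≤ bdry w S) :
    (∀ f : V → ℝ, (Function.support f).Finite →
        ∑' v, (∑' u, markov w v u * f u) ^ 2 * vtxWeight w v ≤
          (1 - i ^ 2) * ∑' v, (f v) ^ 2 * vtxWeight w v) ∧
      Real.sqrt (1 - i ^ 2) ≤ 1 - i ^ 2 / 2 := by
  refine ⟨fun f hf => ?_, Real.sqrt_le_iff.2 ⟨by nlinarith, by nlinarith⟩⟩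
  have hpartial := sum_sq_markov_le hsymm hnn hsum hpos hi0.le hi1 hcheeger hf
  exact (summable_of_sum_le (fun v => mul_nonneg (sq_nonneg _) (vtxWeight_nonneg hnn v))
    hpartial).tsum_le_of_sum_le hpartial
end

section
/- Let G be a weighted graph with w₀-bounded geometry and anchored expansion constant 𝐢(G) > i > 0. Let ℛ be a collection of sets, each a union of i-islands, and let v be a fixed vertex. Suppose for each R ∈ ℛ there exists a bridge structure B interconnecting R ∪ {v} with w₀ · #((B ∪ {v}) ∖ A_i) / |R| ≤ 𝐢(G) − i. Then ℛ is finite. -/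
open scoped BigOperators Classical
open Filter MeasureTheory

variable {V : Type*}

/-!
Put `S = B ∪ R ∪ {v}` and enlarge it by an `i`-isolated core `M` containing `S ∩ A_i`: since
`Δ_i` is supermodular, a finite union of cores is again a core. Let `T` be the component of `S`
in `S ∪ M`. No edge leaves `T ∩ M` inside `M`, so `Δ_i` is additive on the split
`M = (T ∩ M) ∪ (M ∖ T)`, and the core property forces `Δ_i (T ∩ M) > 0`. The rest of `T` lies in
`(B ∪ {v}) ∖ A_i`, so by the counting bound its volume is at most `(𝐢(G) - i) |T ∩ M|`; trading
this against the boundary gives `Δ_j T > 0` for one `j < 𝐢(G)` depending only on `i` and `𝐢(G)`.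
Anchored expansion at level `j` leaves finitely many candidates for `T ∋ v`, and each `R` is a
subset of one of them.
-/

namespace SimpleGraph

variable {G : SimpleGraph V}

theorem connected_induce_insert {s : Set V} {x y : V} (hs : (G.induce s).Connected)
    (hx : x ∈ s) (hxy : G.Adj x y) : (G.induce (insert y s)).Connected := by
  rw [Set.insert_eq, Set.union_comm]
  exact connected_induce_union hs.preconnected Preconnected.of_subsingleton hx rfl hxy

end SimpleGraph

section WeightedGraph

variable {w : V → V → ℝ} {i j c : ℝ}

noncomputable def innerVol (w : V → V → ℝ) (S : Finset V) : ℝ := ∑ x ∈ S, ∑ y ∈ S, w x y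

theorem vol_nonneg (hnn : ∀ u v, 0 ≤ w u v) (S : Finset V) : 0 ≤ vol w S :=
  Finset.sum_nonneg fun x _ => tsum_nonneg (hnn x)

theorem vol_mono (hnn : ∀ u v, 0 ≤ w u v) {S T : Finset V} (h : S ⊆ T) :
    vol w S ≤ vol w T :=
  Finset.sum_le_sum_of_subset_of_nonneg h fun x _ _ => tsum_nonneg (hnn x)

theorem vol_le_mul_card {w₀ : ℝ} (hw0 : ∀ v, vtxWeight w v ≤ w₀) (S : Finset V) :
    vol w S ≤ w₀ * S.card := by
  simpa [vol, mul_comm] using Finset.sum_le_card_nsmul S _ w₀ fun x _ => hw0 x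

theorem innerVol_eq_sum_ite {S U : Finset V} (hSU : S ⊆ U) :
    innerVol w S = ∑ x ∈ U, ∑ y ∈ U, if x ∈ S ∧ y ∈ S then w x y else 0 := by
  simp [innerVol, ite_and, Finset.sum_ite_mem, Finset.inter_eq_right.2 hSU]

theorem innerVol_mono (hnn : ∀ u v, 0 ≤ w u v) {S T : Finset V} (h : S ⊆ T) :
    innerVol w S ≤ innerVol w T := by
  rw [innerVol_eq_sum_ite h, innerVol_eq_sum_ite subset_rfl]
  gcongr with x _ y _
  split_ifs <;> simp_all

theorem innerVol_add_innerVol_le (hnn : ∀ u v, 0 ≤ w u v) (A B : Finset V) :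
    innerVol w A + innerVol w B ≤ innerVol w (A ∪ B) + innerVol w (A ∩ B) := by
  have hA : A ⊆ A ∪ B := Finset.subset_union_left
  have hB : B ⊆ A ∪ B := Finset.subset_union_right
  rw [innerVol_eq_sum_ite hA, innerVol_eq_sum_ite hB, innerVol_eq_sum_ite subset_rfl,
    innerVol_eq_sum_ite (Finset.inter_subset_left.trans hA), ← Finset.sum_add_distrib,
    ← Finset.sum_add_distrib]
  refine Finset.sum_le_sum fun x _ => ?_
  rw [← Finset.sum_add_distrib, ← Finset.sum_add_distrib]
  refine Finset.sum_le_sum fun y _ => ?_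
  split_ifs <;> simp_all

theorem innerVol_union_of_separated (hsymm : ∀ u v, w u v = w v u) {A B : Finset V}
    (hAB : Disjoint A B) (hsep : ∀ a ∈ A, ∀ b ∈ B, w a b = 0) :
    innerVol w (A ∪ B) = innerVol w A + innerVol w B := by
  rw [innerVol_eq_sum_ite subset_rfl, innerVol_eq_sum_ite (Finset.subset_union_left (s₂ := B)),
    innerVol_eq_sum_ite (Finset.subset_union_right (s₁ := A)), ← Finset.sum_add_distrib]
  refine Finset.sum_congr rfl fun x _ => ?_
  rw [← Finset.sum_add_distrib]
  refine Finset.sum_congr rfl fun y _ => ?_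
  have hsep' : ∀ b ∈ B, ∀ a ∈ A, w b a = 0 := fun b hb a ha => hsymm b a ▸ hsep a ha b hb
  have := Finset.disjoint_left.1 hAB
  by_cases hx : x ∈ A <;> by_cases hy : y ∈ A <;> simp_all

theorem bdry_eq (hsum : ∀ v, Summable (w v)) (S : Finset V) :
    bdry w S = vol w S - innerVol w S := by
  rw [bdry, vol, innerVol, ← Finset.sum_sub_distrib]
  refine Finset.sum_congr rfl fun x _ => ?_
  rw [← tsum_subtype, vtxWeight, ← (hsum x).sum_add_tsum_compl (s := S)]
  ring

theorem isol_eq (hsum : ∀ v, Summable (w v)) (S : Finset V) :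
    isol i w S = (i - 1) * vol w S + innerVol w S := by
  rw [isol, bdry_eq hsum]
  ring

theorem isol_add_isol_le (hsum : ∀ v, Summable (w v)) (hnn : ∀ u v, 0 ≤ w u v)
    (A B : Finset V) : isol i w A + isol i w B ≤ isol i w (A ∪ B) + isol i w (A ∩ B) := by
  have hvol : vol w (A ∪ B) + vol w (A ∩ B) = vol w A + vol w B := Finset.sum_union_inter
  simp only [isol_eq hsum]
  linear_combination (i - 1) * hvol.symm + innerVol_add_innerVol_le hnn A B

theorem isol_union_of_separated (hsum : ∀ v, Summable (w v)) (hsymm : ∀ u v, w u v = w v u)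
    {A B : Finset V} (hAB : Disjoint A B) (hsep : ∀ a ∈ A, ∀ b ∈ B, w a b = 0) :
    isol i w (A ∪ B) = isol i w A + isol i w B := by
  simp only [isol_eq hsum, innerVol_union_of_separated hsymm hAB hsep, vol,
    Finset.sum_union hAB]
  ring

theorem isCore_empty : IsCore i w ∅ :=
  fun _ h => absurd h (Finset.not_ssubset_empty _)

theorem IsCore.isol_lt_isol_union (hsum : ∀ v, Summable (w v)) (hnn : ∀ u v, 0 ≤ w u v)
    {S : Finset V} (hS : IsCore i w S) {A : Finset V} (hSA : ¬S ⊆ A) :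
    isol i w A < isol i w (A ∪ S) := by
  have hlt := hS (A ∩ S) (Finset.ssubset_iff_subset_ne.2
    ⟨Finset.inter_subset_right, fun h => hSA (h ▸ Finset.inter_subset_left)⟩)
  linarith [isol_add_isol_le (i := i) hsum hnn A S]

theorem IsCore.isol_le_isol_union (hsum : ∀ v, Summable (w v)) (hnn : ∀ u v, 0 ≤ w u v)
    {S : Finset V} (hS : IsCore i w S) (A : Finset V) : isol i w A ≤ isol i w (A ∪ S) := by
  by_cases hSA : S ⊆ A
  · rw [Finset.union_eq_left.2 hSA]
  · exact (hS.isol_lt_isol_union hsum hnn hSA).le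

theorem IsCore.union (hsum : ∀ v, Summable (w v)) (hnn : ∀ u v, 0 ≤ w u v)
    {S T : Finset V} (hS : IsCore i w S) (hT : IsCore i w T) : IsCore i w (S ∪ T) := by
  intro A hA
  have hAST : A ∪ S ∪ T = S ∪ T := by
    rw [Finset.union_assoc, Finset.union_eq_right.2 hA.subset]
  rw [← hAST]
  by_cases hSA : S ⊆ A
  · have hTA : ¬T ⊆ A ∪ S := fun hTA =>
      hA.not_subset (Finset.union_subset hSA (hTA.trans (Finset.union_subset le_rfl hSA)))
    exact (hS.isol_le_isol_union hsum hnn A).trans_lt (hT.isol_lt_isol_union hsum hnn hTA)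
  · exact (hS.isol_lt_isol_union hsum hnn hSA).trans_le (hT.isol_le_isol_union hsum hnn _)

theorem exists_isCore_superset (hsum : ∀ v, Summable (w v)) (hnn : ∀ u v, 0 ≤ w u v)
    (P : Finset V) (hP : ↑P ⊆ coreUnion i w) : ∃ M, IsCore i w M ∧ P ⊆ M := by
  induction P using Finset.induction_on with
  | empty => exact ⟨∅, isCore_empty, subset_rfl⟩
  | insert x P _ ih =>
    rw [Finset.coe_insert, Set.insert_subset_iff] at hP
    obtain ⟨S, hS, hxS⟩ := hP.1
    obtain ⟨M, hM, hPM⟩ := ih hP.2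
    exact ⟨M ∪ S, hM.union hsum hnn hS,
      Finset.insert_subset (Finset.mem_union_right _ hxS) (hPM.trans Finset.subset_union_left)⟩

theorem IsCore.isol_pos_of_separated (hsum : ∀ v, Summable (w v)) (hsymm : ∀ u v, w u v = w v u)
    {M G : Finset V} (hM : IsCore i w M) (hGM : G ⊆ M) (hG : G.Nonempty)
    (hsep : ∀ x ∈ G, ∀ y ∈ M \ G, w x y = 0) : 0 < isol i w G := by
  have hsplit := isol_union_of_separated (i := i) hsum hsymm Finset.disjoint_sdiff hsep
  rw [Finset.union_sdiff_of_subset hGM] at hsplit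
  have hlt := hM (M \ G) (Finset.sdiff_ssubset hGM hG)
  linarith

theorem isol_pos_of_vol_sdiff_le (hsum : ∀ v, Summable (w v)) (hnn : ∀ u v, 0 ≤ w u v)
    {G T : Finset V} (hGT : G ⊆ T) (hG : 0 < isol i w G) (hvol : vol w (T \ G) ≤ c * vol w G)
    (hij : i ≤ j) (hj : (1 - j) * c ≤ j - i) : 0 < isol j w T := by
  have hsplit : vol w T = vol w G + vol w (T \ G) := by
    rw [vol, vol, vol, ← Finset.sum_union Finset.disjoint_sdiff, Finset.union_sdiff_of_subset hGT]
  have hinner := innerVol_mono hnn hGT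
  have hg := vol_nonneg hnn G
  have htrade : (1 - j) * vol w (T \ G) ≤ (j - i) * vol w G := by
    rcases le_total j 1 with hj1 | hj1
    · calc (1 - j) * vol w (T \ G) ≤ (1 - j) * (c * vol w G) := by gcongr
        _ = ((1 - j) * c) * vol w G := by ring
        _ ≤ (j - i) * vol w G := by gcongr
    · nlinarith [vol_nonneg hnn (T \ G)]
  rw [isol_eq hsum] at hG ⊢
  rw [hsplit]
  linarith

theorem gra_adj_of_pos {x y : V} (hxy : x ≠ y) (h : 0 < w x y) : (gra w).Adj x y := by
  simp [gra, SimpleGraph.fromRel_adj, hxy, h]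

theorem exists_connSet_separated (hnn : ∀ u v, 0 ≤ w u v) {S U : Finset V}
    (hS : ConnSet w ↑S) (hSU : S ⊆ U) :
    ∃ T ⊆ U, S ⊆ T ∧ ConnSet w ↑T ∧ ∀ x ∈ T, ∀ y ∈ U \ T, w x y = 0 := by
  obtain ⟨T, hST, hT⟩ := (U.powerset.filter fun T => S ⊆ T ∧ ConnSet w ↑T).exists_le_maximal
    (Finset.mem_filter.2 ⟨Finset.mem_powerset.2 hSU, subset_rfl, hS⟩)
  obtain ⟨hTU, -, hTconn⟩ : T ⊆ U ∧ S ⊆ T ∧ ConnSet w ↑T := by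
    simpa only [Finset.mem_filter, Finset.mem_powerset, and_assoc] using hT.prop
  refine ⟨T, hTU, hST, hTconn, fun x hx y hy => ?_⟩
  rw [Finset.mem_sdiff] at hy
  by_contra hxy
  have hadj := gra_adj_of_pos (ne_of_mem_of_not_mem hx hy.2) ((hnn x y).lt_of_ne' hxy)
  have hins : insert y T ∈ U.powerset.filter fun T => S ⊆ T ∧ ConnSet w ↑T := by
    refine Finset.mem_filter.2 ⟨Finset.mem_powerset.2 (Finset.insert_subset hy.1 hTU),
      hST.trans (Finset.subset_insert _ _), ?_⟩
    rw [ConnSet, Finset.coe_insert]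
    exact SimpleGraph.connected_induce_insert hTconn hx hadj
  exact hy.2 (hT.2 hins (Finset.subset_insert _ _) (Finset.mem_insert_self y T))

theorem IsIsland.subset_coreUnion {C : Set V} (h : IsIsland i w C) : C ⊆ coreUnion i w := h.2.1

theorem exists_connSet_isol_pos_superset (hsum : ∀ v, Summable (w v)) (hnn : ∀ u v, 0 ≤ w u v)
    (hsymm : ∀ u v, w u v = w v u) {w₀ : ℝ} (hw0 : ∀ x, vtxWeight w x ≤ w₀) (hc : 0 ≤ c)
    (hij : i ≤ j) (hj : (1 - j) * c ≤ j - i) {R B : Finset V} {v : V} (hR : R.Nonempty)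
    (hRA : ↑R ⊆ coreUnion i w) (hconn : ConnSet w ((↑B : Set V) ∪ ↑R ∪ {v}))
    (hcount : w₀ * (((↑B : Set V) ∪ {v}) \ coreUnion i w).ncard ≤ c * vol w R) :
    ∃ T : Finset V, v ∈ T ∧ ConnSet w ↑T ∧ 0 < isol j w T ∧ R ⊆ T := by
  set S := B ∪ R ∪ {v}
  have hS : ConnSet w ↑S := by simpa [S] using hconn
  have hRS : R ⊆ S := Finset.subset_union_right.trans Finset.subset_union_left
  obtain ⟨M, hM, hSM⟩ := exists_isCore_superset hsum hnn (S.filter (· ∈ coreUnion i w))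
    fun x hx => (Finset.mem_filter.1 hx).2
  have hmemM {x : V} (hxS : x ∈ S) (hxA : x ∈ coreUnion i w) : x ∈ M :=
    hSM (Finset.mem_filter.2 ⟨hxS, hxA⟩)
  obtain ⟨T, hTSM, hST, hT, hsep⟩ :=
    exists_connSet_separated hnn hS (Finset.subset_union_left (s₂ := M))
  have hRTM : R ⊆ T ∩ M := Finset.subset_inter (hRS.trans hST) fun x hx => hmemM (hRS hx) (hRA hx)
  have hcore : 0 < isol i w (T ∩ M) := by
    refine hM.isol_pos_of_separated hsum hsymm Finset.inter_subset_right (hR.mono hRTM)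
      fun x hx y hy => hsep x (Finset.mem_of_mem_inter_left hx) y ?_
    simp only [Finset.mem_sdiff, Finset.mem_inter, Finset.mem_union] at hy ⊢
    tauto
  have hrest : ↑(T \ (T ∩ M)) ⊆ ((↑B : Set V) ∪ {v}) \ coreUnion i w := by
    intro x hx
    simp only [Finset.coe_sdiff, Set.mem_sdiff, Finset.mem_coe, Finset.mem_inter] at hx
    have hxS : x ∈ S := (Finset.mem_union.1 (hTSM hx.1)).resolve_right fun h => hx.2 ⟨hx.1, h⟩
    have hxA : x ∉ coreUnion i w := fun h => hx.2 ⟨hx.1, hmemM hxS h⟩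
    have hxR : x ∉ R := fun h => hxA (hRA h)
    simp only [S, Finset.mem_union, Finset.mem_singleton] at hxS
    simp only [Set.mem_sdiff, Set.mem_union, Finset.mem_coe, Set.mem_singleton_iff]
    tauto
  have hw₀ : 0 ≤ w₀ := (tsum_nonneg (hnn v)).trans (hw0 v)
  refine ⟨T, hST (by simp [S]), hT, isol_pos_of_vol_sdiff_le hsum hnn Finset.inter_subset_left
    hcore ?_ hij hj, hRTM.trans Finset.inter_subset_left⟩
  calc vol w (T \ (T ∩ M)) ≤ w₀ * (T \ (T ∩ M)).card := vol_le_mul_card hw0 _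
    _ ≤ w₀ * (((↑B : Set V) ∪ {v}) \ coreUnion i w).ncard := by
      gcongr
      rw [← Set.ncard_coe_finset]
      exact Set.ncard_le_ncard hrest ((B.finite_toSet.union (Set.finite_singleton v)).sdiff)
    _ ≤ c * vol w R := hcount
    _ ≤ c * vol w (T ∩ M) := by gcongr; exact vol_mono hnn hRTM

end WeightedGraph

theorem exists_level_lt {i iG : ℝ} (hiG0 : 0 < iG) (hiG : i < iG) :
    ∃ j < iG, i ≤ j ∧ (1 - j) * (iG - i) ≤ j - i := by
  have hden : 0 < 1 + iG - i := by linarith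
  refine ⟨max i (iG / (1 + iG - i)), max_lt hiG ?_, le_max_left _ _, ?_⟩
  · rw [div_lt_iff₀ hden]
    nlinarith
  · have := (div_le_iff₀ hden).1 (le_max_right i (iG / (1 + iG - i)))
    linarith

theorem bridged_regions_finite_general (w : V → V → ℝ)
    (hsymm : ∀ u v, w u v = w v u) (hnn : ∀ u v, 0 ≤ w u v)
    (hsum : ∀ v, Summable (w v))
    -- `w₀`-bounded geometry
    (w₀ : ℝ) (hw0 : ∀ v, vtxWeight w v ≤ w₀)
    -- anchored expansion constant `iG > i > 0`
    (iG i : ℝ) (hi0 : 0 < i) (hiG : i < iG)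
    (hanch : ∀ j : ℝ, j < iG → Anchored j w)
    (v : V) (ℛ : Set (Finset V))
    -- each `R ∈ ℛ` is a nonempty union of `i`-islands
    (hunion : ∀ R ∈ ℛ, R.Nonempty ∧ ∀ x ∈ R, ∃ C : Finset V,
      IsIsland i w (↑C : Set V) ∧ x ∈ C ∧ (↑C : Set V) ⊆ (↑R : Set V))
    -- bridge structure interconnecting `R ∪ {v}` satisfying the counting bound
    (hbridge : ∀ R ∈ ℛ, ∃ B : Finset V,
      ConnSet w ((↑B : Set V) ∪ (↑R : Set V) ∪ {v}) ∧
        w₀ * (((↑B : Set V) ∪ {v}) \ coreUnion i w).ncard ≤ (iG - i) * vol w R) :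
    ℛ.Finite := by
  obtain ⟨j, hjG, hij, hj⟩ := exists_level_lt (hi0.trans hiG) hiG
  refine ((hanch j hjG v).biUnion fun T _ => T.powerset.finite_toSet).subset fun R hR => ?_
  obtain ⟨hRne, hRislands⟩ := hunion R hR
  have hRA : ↑R ⊆ coreUnion i w := fun x hx =>
    let ⟨_, hC, hxC, _⟩ := hRislands x hx
    hC.subset_coreUnion hxC
  obtain ⟨B, hconn, hcount⟩ := hbridge R hR
  obtain ⟨T, hvT, hT, hisol, hRT⟩ := exists_connSet_isol_pos_superset hsum hnn hsymm hw0
    (sub_nonneg.2 hiG.le) hij hj hRne hRA hconn hcount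
  exact Set.mem_biUnion ⟨hvT, hT, hisol⟩ (Finset.mem_coe.2 (Finset.mem_powerset.2 hRT))

theorem bridged_regions_finite [DecidableEq V] (w : V → V → ℝ)
    (hsymm : ∀ u v, w u v = w v u) (hnn : ∀ u v, 0 ≤ w u v)
    (hsum : ∀ v, Summable (w v))
    -- `w₀`-bounded geometry
    (w₀ : ℝ) (hw1 : ∀ u v, w u v ≠ 0 → 1 ≤ w u v) (hw0 : ∀ v, vtxWeight w v ≤ w₀)
    -- anchored expansion constant `iG > i > 0`
    (iG i : ℝ) (hi0 : 0 < i) (hiG : i < iG)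
    (hanch : ∀ j : ℝ, j < iG → Anchored j w)
    (v : V) (ℛ : Set (Finset V))
    -- each `R ∈ ℛ` is a nonempty union of `i`-islands
    (hunion : ∀ R ∈ ℛ, R.Nonempty ∧ ∀ x ∈ R, ∃ C : Finset V,
      IsIsland i w (↑C : Set V) ∧ x ∈ C ∧ (↑C : Set V) ⊆ (↑R : Set V))
    -- bridge structure interconnecting `R ∪ {v}` satisfying the counting bound
    (hbridge : ∀ R ∈ ℛ, ∃ B : Finset V,
      ConnSet w ((↑B : Set V) ∪ (↑R : Set V) ∪ {v}) ∧
        w₀ * (((↑B : Set V) ∪ {v}) \ coreUnion i w).ncard ≤ (iG - i) * vol w R) :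
    ℛ.Finite :=
  bridged_regions_finite_general w hsymm hnn hsum w₀ hw0 iG i hi0 hiG hanch v ℛ hunion hbridge
end
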